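/- arXiv:2303.16433 — 5 statements merged into one kernel-verified Lean document; each statement's English description precedes it below -/
import Mathlib

section
/- Let F : X → ℝⁿ be continuous and pseudo-monotone plus on a convex set X. Suppose x* ∈ X satisfies ⟨F(x*), x − x*⟩ ≥ 0 for all x ∈ X, and suppose x° ∈ X satisfies ⟨F(x°), x° − x*⟩ = 0. Then F(x°) = F(x*) and x° is also a critical point, i.e., ⟨F(x°), x − x°⟩ ≥ 0 for all x ∈ X. -/
open RealInnerProductSpace

theorem inner_sub_nonneg_of_inner_sub_eq_zero {E : Type*} [NormedAddCommGroup E]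
    [InnerProductSpace ℝ E] {X : Set E} {g y z : E} (hy : ∀ x ∈ X, 0 ≤ ⟪g, x - y⟫)
    (hz : ⟪g, z - y⟫ = 0) : ∀ x ∈ X, 0 ≤ ⟪g, x - z⟫ := by
  intro x hx
  have hsplit : ⟪g, x - z⟫ = ⟪g, x - y⟫ - ⟪g, z - y⟫ := by
    rw [← inner_sub_right, sub_sub_sub_cancel_right]
  rw [hsplit, hz, sub_zero]
  exact hy x hx

theorem stmt_3_general {n : ℕ} (X : Set (EuclideanSpace ℝ (Fin n)))
    (F : EuclideanSpace ℝ (Fin n) → EuclideanSpace ℝ (Fin n))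
    (hF_plus : ∀ x ∈ X, ∀ y ∈ X, 0 ≤ ⟪F y, x - y⟫ → ⟪F x, x - y⟫ = 0 → F x = F y)
    (xstar : EuclideanSpace ℝ (Fin n)) (hxstar : xstar ∈ X)
    (hcp : ∀ x ∈ X, 0 ≤ ⟪F xstar, x - xstar⟫)
    (xcirc : EuclideanSpace ℝ (Fin n)) (hxcirc : xcirc ∈ X)
    (hzero : ⟪F xcirc, xcirc - xstar⟫ = 0) :
    F xcirc = F xstar ∧ ∀ x ∈ X, 0 ≤ ⟪F xcirc, x - xcirc⟫ := by
  have heq : F xcirc = F xstar :=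
    hF_plus xcirc hxcirc xstar hxstar (hcp xcirc hxcirc) hzero
  rw [heq] at hzero ⊢
  exact ⟨rfl, inner_sub_nonneg_of_inner_sub_eq_zero hcp hzero⟩

/-- If `F` is continuous and pseudo-monotone plus on a convex set `X`, `x*` is a
critical point and `x°` satisfies `⟪F x°, x° - x*⟫ = 0`, then `F x° = F x*` and
`x°` is also a critical point. -/
theorem stmt_3 {n : ℕ} (X : Set (EuclideanSpace ℝ (Fin n)))
    (hX : Convex ℝ X)
    (F : EuclideanSpace ℝ (Fin n) → EuclideanSpace ℝ (Fin n))
    (hF_cont : ContinuousOn F X)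
    (hF_pm : ∀ x ∈ X, ∀ y ∈ X, 0 ≤ ⟪F y, x - y⟫ → 0 ≤ ⟪F x, x - y⟫)
    (hF_plus : ∀ x ∈ X, ∀ y ∈ X, 0 ≤ ⟪F y, x - y⟫ → ⟪F x, x - y⟫ = 0 → F x = F y)
    (xstar : EuclideanSpace ℝ (Fin n)) (hxstar : xstar ∈ X)
    (hcp : ∀ x ∈ X, 0 ≤ ⟪F xstar, x - xstar⟫)
    (xcirc : EuclideanSpace ℝ (Fin n)) (hxcirc : xcirc ∈ X)
    (hzero : ⟪F xcirc, xcirc - xstar⟫ = 0) :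
    F xcirc = F xstar ∧ ∀ x ∈ X, 0 ≤ ⟪F xcirc, x - xcirc⟫ :=
  stmt_3_general X F hF_plus xstar hxstar hcp xcirc hxcirc hzero
end

section
/- Let (a_k)_{k≥1} be nonnegative reals with a_1 = 0, and let β : ℕ → ℝ_{≥0} satisfy β(k) → 0 as k → ∞. Suppose a_k ≤ β(π(k))·a_{π(k)} + c for all k ≥ 2, where c ≥ 0 and π(k) < k for all k. Then sup_k a_k < ∞. -/
/-!
Once `β ≤ q < 1` beyond some index `N`, any `C` with `q * C + c ≤ C` is an invariant bound for
the recursion at indices `k` with `π k ≥ N`; the finitely many values at indices below `N`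
only enter the choice of `C`.
-/

open Filter

theorem le_of_le_mul_comp_add {a β : ℕ → ℝ} {π : ℕ → ℕ} {c q C : ℝ} {N : ℕ}
    (ha : ∀ k, 0 ≤ a k) (hπ : ∀ k, 1 ≤ k → π k < k)
    (hrec : ∀ k, 2 ≤ k → a k ≤ β (π k) * a (π k) + c)
    (hN : 1 ≤ N) (hβN : ∀ m, N ≤ m → β m ≤ q) (hq : 0 ≤ q)
    (h1 : a 1 ≤ C) (hinit : ∀ m < N, β m * a m + c ≤ C) (hC : q * C + c ≤ C) :
    ∀ k, 1 ≤ k → a k ≤ C := by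
  intro k
  induction k using Nat.strong_induction_on with
  | _ k ih =>
    intro hk
    rcases hk.eq_or_lt with rfl | hk2
    · exact h1
    rcases lt_or_ge (π k) N with hlt | hge
    · exact (hrec k hk2).trans (hinit _ hlt)
    · have hprev : a (π k) ≤ C := ih (π k) (hπ k hk) (hN.trans hge)
      calc a k ≤ β (π k) * a (π k) + c := hrec k hk2
        _ ≤ q * C + c := by gcongr; exacts [ha _, hβN _ hge]
        _ ≤ C := hC

theorem stmt_5_general (a : ℕ → ℝ) (ha : ∀ k, 0 ≤ a k)
    (β : ℕ → ℝ) (hβ : Tendsto β atTop (nhds 0))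
    (c : ℝ)
    (π : ℕ → ℕ) (hπ : ∀ k, 1 ≤ k → π k < k)
    (hrec : ∀ k, 2 ≤ k → a k ≤ β (π k) * a (π k) + c) :
    ∃ C : ℝ, ∀ k, 1 ≤ k → a k ≤ C := by
  obtain ⟨N, hN⟩ := ((hβ.eventually (ge_mem_nhds (by norm_num : (0 : ℝ) < 1 / 2))).and
    (eventually_ge_atTop 1)).exists_forall_of_atTop
  obtain ⟨B, hB⟩ := ((Set.finite_Iio N).image fun m => β m * a m).bddAbove
  refine ⟨max (a 1) (max (B + c) (2 * c)),
    le_of_le_mul_comp_add ha hπ hrec (hN N le_rfl).2 (fun m hm => (hN m hm).1) (by norm_num)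
      (le_max_left _ _) (fun m hm => ?_) ?_⟩
  · have : β m * a m ≤ B := hB (Set.mem_image_of_mem _ hm)
    linarith [le_max_left (B + c) (2 * c), le_max_right (a 1) (max (B + c) (2 * c))]
  · linarith [le_max_right (B + c) (2 * c), le_max_right (a 1) (max (B + c) (2 * c))]

/-- If `a 1 = 0`, `a` is nonnegative, and `a k ≤ β (π k) * a (π k) + c` for `k ≥ 2`,
where `π k < k` and `β k → 0`, then `(a k)_{k ≥ 1}` is uniformly bounded. -/
theorem stmt_5 (a : ℕ → ℝ) (ha : ∀ k, 0 ≤ a k) (ha1 : a 1 = 0)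
    (β : ℕ → ℝ) (hβ_nonneg : ∀ k, 0 ≤ β k) (hβ : Tendsto β atTop (nhds 0))
    (c : ℝ) (hc : 0 ≤ c)
    (π : ℕ → ℕ) (hπ : ∀ k, 1 ≤ k → π k < k)
    (hrec : ∀ k, 2 ≤ k → a k ≤ β (π k) * a (π k) + c) :
    ∃ C : ℝ, ∀ k, 1 ≤ k → a k ≤ C :=
  stmt_5_general a ha β hβ c π hπ hrec
end

section
/- Suppose the realized delays satisfy d_t ≤ D for all t ≤ k, where D ≥ 0 is a constant. Under the priority-based utilization strategy in which feedback generated at time t arrives at time ⌈t + d_t⌉ and at each iteration the earliest unused feedback is consumed (or no update happens if none is available), the number of iterations among {1, …, k} with no available feedback is at most min(k, D + 1). -/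
/-!
Let `m ≤ k` be the last idle iteration and `L = ⌈D⌉`. Every feedback item `t ≤ m - L` has
arrived by time `m`, so by greediness it was consumed at some earlier iteration; hence at least
`m - L` of the iterations `1, …, m` are busy and at most `L ≤ D + 1` of them are idle.
-/

open Finset

namespace DelayedFeedback

theorem card_filter_eq_zero_le_of_subset_image {c : ℕ → ℕ} {m L : ℕ}
    (h : Icc 1 (m - L) ⊆ (Icc 1 m).image c) : #{s ∈ Icc 1 m | c s = 0} ≤ L := by
  have h_busy : Icc 1 (m - L) ⊆ {s ∈ Icc 1 m | c s ≠ 0}.image c := by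
    intro t ht
    obtain ⟨s, hs, rfl⟩ := mem_image.1 (h ht)
    have : c s ≠ 0 := by simp only [mem_Icc] at ht; omega
    exact mem_image_of_mem c (mem_filter.2 ⟨hs, this⟩)
  have h_lower := (card_le_card h_busy).trans card_image_le
  have h_split := card_filter_add_card_filter_not (s := Icc 1 m) (fun s => c s = 0)
  simp only [Nat.card_Icc, add_tsub_cancel_right, ne_eq] at h_lower h_split
  omega

/-- `a t` is the arrival time of the feedback generated at time `t`. -/
theorem Icc_subset_image_of_greedy {c a : ℕ → ℕ} {m L : ℕ}
    (h_arrived : ∀ s, c s ≠ 0 → a (c s) ≤ s)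
    (h_greedy : ∀ t, 1 ≤ t → a t ≤ m → ∃ s < m, c s = t)
    (ha : ∀ t ∈ Icc 1 (m - L), 1 ≤ a t ∧ a t ≤ t + L) :
    Icc 1 (m - L) ⊆ (Icc 1 m).image c := by
  intro t ht
  obtain ⟨ha_pos, ha_le⟩ := ha t ht
  have ht' := mem_Icc.1 ht
  obtain ⟨s, hsm, rfl⟩ := h_greedy _ ht'.1 (by omega)
  have hs := h_arrived s (by omega)
  exact mem_image_of_mem c (mem_Icc.2 ⟨by omega, hsm.le⟩)

theorem card_filter_Icc_le_of_forall {p : ℕ → Prop} [DecidablePred p] {k L : ℕ}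
    (h : ∀ m ∈ Icc 1 k, p m → #{s ∈ Icc 1 m | p s} ≤ L) : #{s ∈ Icc 1 k | p s} ≤ L := by
  rcases eq_empty_or_nonempty {s ∈ Icc 1 k | p s} with h_empty | h_ne
  · simp [h_empty]
  set m := max' _ h_ne
  obtain ⟨hm, hpm⟩ := mem_filter.1 (max'_mem _ h_ne)
  refine le_trans (card_le_card fun s hs => ?_) (h m hm hpm)
  obtain ⟨hs, hps⟩ := mem_filter.1 hs
  exact mem_filter.2 ⟨mem_Icc.2 ⟨(mem_Icc.1 hs).1, le_max' _ s (mem_filter.2 ⟨hs, hps⟩)⟩, hps⟩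

theorem one_le_ceil_add {t : ℕ} {δ : ℝ} (ht : 1 ≤ t) (hδ : 0 ≤ δ) : 1 ≤ ⌈(t : ℝ) + δ⌉₊ := by
  rw [Nat.one_le_ceil_iff]
  have : (1 : ℝ) ≤ t := by exact_mod_cast ht
  linarith

theorem ceil_add_le_add_ceil {t : ℕ} {δ D : ℝ} (hD : 0 ≤ D) (hδ : δ ≤ D) :
    ⌈(t : ℝ) + δ⌉₊ ≤ t + ⌈D⌉₊ := by
  calc ⌈(t : ℝ) + δ⌉₊ ≤ ⌈D + t⌉₊ := Nat.ceil_le_ceil (by linarith)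
    _ = ⌈D⌉₊ + t := Nat.ceil_add_natCast hD t
    _ = t + ⌈D⌉₊ := add_comm _ _

end DelayedFeedback

open DelayedFeedback in
theorem stmt_6_general (k : ℕ) (d : ℕ → ℝ) (D : ℝ) (hD : 0 ≤ D)
    (hd_nonneg : ∀ t, 0 ≤ d t)
    (hd_bdd : ∀ t : ℕ, 1 ≤ t → t ≤ k → d t ≤ D)
    (c : ℕ → ℕ)
    -- only feedback that has already arrived is consumed
    (h_arrived : ∀ s, c s ≠ 0 → 1 ≤ c s ∧ ⌈(c s : ℝ) + d (c s)⌉₊ ≤ s)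
    -- greediness: if no feedback is consumed at iteration `s`, then every piece of
    -- feedback that has arrived by time `s` was already consumed earlier
    (h_greedy : ∀ s, 1 ≤ s → c s = 0 →
      ∀ t : ℕ, 1 ≤ t → ⌈(t : ℝ) + d t⌉₊ ≤ s → ∃ s' < s, c s' = t) :
    (((Finset.Icc 1 k).filter (fun s => c s = 0)).card : ℝ) ≤ min (k : ℝ) (D + 1) := by
  have h_idle : #{s ∈ Icc 1 k | c s = 0} ≤ ⌈D⌉₊ := by
    refine card_filter_Icc_le_of_forall fun m hm hcm => ?_
    have hm := mem_Icc.1 hm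
    refine card_filter_eq_zero_le_of_subset_image <| Icc_subset_image_of_greedy
      (a := fun t => ⌈(t : ℝ) + d t⌉₊) (fun s hs => (h_arrived s hs).2)
      (h_greedy m hm.1 hcm) fun t ht => ?_
    have ht := mem_Icc.1 ht
    exact ⟨one_le_ceil_add ht.1 (hd_nonneg t), ceil_add_le_add_ceil hD (hd_bdd t ht.1 (by omega))⟩
  refine le_min ?_ ?_
  · exact_mod_cast (card_filter_le _ _).trans (Nat.card_Icc 1 k).le
  · calc (#{s ∈ Icc 1 k | c s = 0} : ℝ) ≤ ⌈D⌉₊ := by exact_mod_cast h_idle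
      _ ≤ D + 1 := (Nat.ceil_lt_add_one hD).le

/-- Priority-based utilization strategy with delays bounded by `D`: the number of
iterations among `{1,…,k}` with no available feedback is at most `min k (D+1)`.
Here `c s` is the timestamp of the feedback consumed at iteration `s` (`c s = 0`
meaning no feedback available), feedback generated at time `t` arrives at time
`⌈t + d t⌉`. -/
theorem stmt_6 (k : ℕ) (d : ℕ → ℝ) (D : ℝ) (hD : 0 ≤ D)
    (hd_nonneg : ∀ t, 0 ≤ d t)
    (hd_bdd : ∀ t : ℕ, 1 ≤ t → t ≤ k → d t ≤ D)
    (c : ℕ → ℕ)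
    -- only feedback that has already arrived is consumed
    (h_arrived : ∀ s, c s ≠ 0 → 1 ≤ c s ∧ ⌈(c s : ℝ) + d (c s)⌉₊ ≤ s)
    -- each piece of feedback is consumed at most once
    (h_inj : ∀ s s', c s ≠ 0 → c s = c s' → s = s')
    -- greediness: if no feedback is consumed at iteration `s`, then every piece of
    -- feedback that has arrived by time `s` was already consumed earlier
    (h_greedy : ∀ s, 1 ≤ s → c s = 0 →
      ∀ t : ℕ, 1 ≤ t → ⌈(t : ℝ) + d t⌉₊ ≤ s → ∃ s' < s, c s' = t) :
    (((Finset.Icc 1 k).filter (fun s => c s = 0)).card : ℝ) ≤ min (k : ℝ) (D + 1) :=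
  stmt_6_general k d D hD hd_nonneg hd_bdd c h_arrived h_greedy
end

section
/- If α_γ ∈ (1/2, 1], α_d ∈ [0, 1), and 2α_γ − α_d > 1, then the series Σ_{k≥1} γ_k · (k^{α_d} + d̄) · γ_{max(1, k − ⌈k^{α_d}+d̄⌉)} converges, where γ_k = γ_0/(k+K_γ)^{α_γ} with γ_0 > 0, K_γ ≥ 0, d̄ ≥ 0. -/
/-!
The delay `⌈k ^ αd + d̄⌉₊` is eventually at most `k / 2`, because `αd < 1`. So the delayed step
size `γ_{max(1, k - ⌈k ^ αd + d̄⌉₊)}` is, like `γ_k`, of order `k ^ (-αγ)`, and the `k`-th term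
is `O(k ^ (αd - 2 αγ))`, a summable `p`-series since `αd - 2 αγ < -1`.
-/

open Filter Asymptotics

lemma eventually_rpow_add_le_half {α : ℝ} (hα : α < 1) (c : ℝ) :
    ∀ᶠ x : ℝ in atTop, x ^ α + c ≤ x / 2 := by
  have hsmall : ∀ᶠ x : ℝ in atTop, x ^ (α - 1) ≤ 1 / 4 := by
    have h := tendsto_rpow_neg_atTop (sub_pos.2 hα)
    rw [neg_sub] at h
    exact h.eventually (ge_mem_nhds (by norm_num))
  filter_upwards [hsmall, eventually_ge_atTop (4 * c), eventually_gt_atTop 0]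
    with x hx hcx hx0
  have hsplit : x ^ α = x ^ (α - 1) * x := by
    rw [← Real.rpow_add_one hx0.ne']
    ring_nf
  nlinarith

lemma eventually_half_le_sub_ceil_rpow_add {α : ℝ} (hα : α < 1) (c : ℝ) :
    ∀ᶠ n : ℕ in atTop, (n : ℝ) / 2 ≤ ((n - ⌈(n : ℝ) ^ α + c⌉₊ : ℕ) : ℝ) := by
  filter_upwards [tendsto_natCast_atTop_atTop.eventually (eventually_rpow_add_le_half hα (c + 1))]
    with n hn
  have hceil : ⌈(n : ℝ) ^ α + c⌉₊ ≤ ⌊(n : ℝ) / 2⌋₊ :=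
    Nat.ceil_le.2 (by linarith [Nat.sub_one_lt_floor ((n : ℝ) / 2)])
  have hfloor : (⌊(n : ℝ) / 2⌋₊ : ℝ) ≤ n / 2 := Nat.floor_le (by positivity)
  have hle : ⌈(n : ℝ) ^ α + c⌉₊ ≤ n := hceil.trans (Nat.floor_le_of_le (by linarith))
  rw [Nat.cast_sub hle]
  linarith [(Nat.cast_le (α := ℝ)).2 hceil]

lemma isBigO_div_natCast_comp_add_rpow {γ₀ K α c : ℝ} (hK : 0 ≤ K) (hα : 0 ≤ α) (hc : 0 < c)
    {m : ℕ → ℕ} (hm : ∀ᶠ n in atTop, c * n ≤ m n) :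
    (fun n => γ₀ / ((m n : ℝ) + K) ^ α) =O[atTop] fun n : ℕ => (n : ℝ) ^ (-α) := by
  refine IsBigO.of_bound (|γ₀| * c ^ (-α)) ?_
  filter_upwards [hm, eventually_gt_atTop 0] with n hmn hn
  have hcn : 0 < c * n := by positivity
  have hmono : (c * n) ^ α ≤ ((m n : ℝ) + K) ^ α := Real.rpow_le_rpow hcn.le (by linarith) hα
  rw [Real.norm_eq_abs, Real.norm_eq_abs, abs_div,
    abs_of_nonneg (Real.rpow_nonneg (by positivity) α),
    abs_of_nonneg (Real.rpow_nonneg (Nat.cast_nonneg n) _), mul_assoc,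
    ← Real.mul_rpow hc.le (Nat.cast_nonneg n), Real.rpow_neg hcn.le, ← div_eq_mul_inv]
  exact div_le_div_of_nonneg_left (abs_nonneg γ₀) (Real.rpow_pos_of_pos hcn α) hmono

lemma isBigO_natCast_rpow_add_const {α : ℝ} (hα : 0 ≤ α) (c : ℝ) :
    (fun n : ℕ => (n : ℝ) ^ α + c) =O[atTop] fun n : ℕ => (n : ℝ) ^ α := by
  refine (isBigO_refl _ _).add (IsBigO.of_bound |c| ?_)
  filter_upwards [eventually_ge_atTop 1] with n hn
  have hone : 1 ≤ (n : ℝ) ^ α := Real.one_le_rpow (by exact_mod_cast hn) hα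
  rw [Real.norm_eq_abs, Real.norm_eq_abs, abs_of_nonneg (zero_le_one.trans hone)]
  nlinarith [abs_nonneg c]

lemma isBigO_delayed_error_term {γ : ℕ → ℝ} {γ₀ K αγ αd db : ℝ} (hK : 0 ≤ K) (hαγ : 0 ≤ αγ)
    (hαd0 : 0 ≤ αd) (hαd1 : αd < 1) (hγ : ∀ k, γ k = γ₀ / ((k : ℝ) + K) ^ αγ) :
    (fun n : ℕ => γ n * ((n : ℝ) ^ αd + db) * γ (max 1 (n - ⌈(n : ℝ) ^ αd + db⌉₊)))
      =O[atTop] fun n : ℕ => (n : ℝ) ^ (αd - 2 * αγ) := by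
  obtain rfl : γ = _ := funext hγ
  have hcurrent := isBigO_div_natCast_comp_add_rpow (γ₀ := γ₀) hK hαγ one_pos (m := id)
    (by simp)
  have hdelayed := isBigO_div_natCast_comp_add_rpow (γ₀ := γ₀) hK hαγ (one_half_pos (α := ℝ))
    (m := fun n => max 1 (n - ⌈(n : ℝ) ^ αd + db⌉₊)) <| by
      filter_upwards [eventually_half_le_sub_ceil_rpow_add hαd1 db] with n hn
      push_cast
      linarith [le_max_right (1 : ℝ) ((n - ⌈(n : ℝ) ^ αd + db⌉₊ : ℕ) : ℝ)]
  refine ((hcurrent.mul (isBigO_natCast_rpow_add_const hαd0 db)).mul hdelayed).trans_eventuallyEq ?_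
  filter_upwards [eventually_gt_atTop 0] with n hn
  have hn' : (0 : ℝ) < n := by exact_mod_cast hn
  rw [← Real.rpow_add hn', ← Real.rpow_add hn']
  ring_nf

theorem stmt_7_general (γ0 : ℝ) (Kγ : ℝ) (hKγ : 0 ≤ Kγ)
    (αγ : ℝ) (hαγ0 : 1 / 2 < αγ)
    (αd : ℝ) (hαd0 : 0 ≤ αd) (hαd1 : αd < 1)
    (hsum : 1 < 2 * αγ - αd)
    (db : ℝ)
    (γ : ℕ → ℝ) (hγ : ∀ k, γ k = γ0 / ((k : ℝ) + Kγ) ^ αγ) :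
    Summable (fun k : ℕ =>
      γ (k + 1) * (((k + 1 : ℕ) : ℝ) ^ αd + db) *
        γ (max 1 ((k + 1) - ⌈((k + 1 : ℕ) : ℝ) ^ αd + db⌉₊))) := by
  have hp : Summable fun n : ℕ => (n : ℝ) ^ (αd - 2 * αγ) :=
    Real.summable_nat_rpow.mpr (by linarith)
  exact (summable_nat_add_iff 1).mpr <| summable_of_isBigO_nat hp <|
    isBigO_delayed_error_term hKγ (by linarith) hαd0 hαd1 hγ

/-- Summability of the delay-induced error term: with `γ k = γ₀/(k+Kγ)^αγ`,
`1/2 < αγ ≤ 1`, `0 ≤ αd < 1`, and `2αγ - αd > 1`, the series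
`∑_{k ≥ 1} γ k (k^αd + d̄) γ_{max(1, k - ⌈k^αd + d̄⌉)}` converges. -/
theorem stmt_7 (γ0 : ℝ) (hγ0 : 0 < γ0) (Kγ : ℝ) (hKγ : 0 ≤ Kγ)
    (αγ : ℝ) (hαγ0 : 1 / 2 < αγ) (hαγ1 : αγ ≤ 1)
    (αd : ℝ) (hαd0 : 0 ≤ αd) (hαd1 : αd < 1)
    (hsum : 1 < 2 * αγ - αd)
    (db : ℝ) (hdb : 0 ≤ db)
    (γ : ℕ → ℝ) (hγ : ∀ k, γ k = γ0 / ((k : ℝ) + Kγ) ^ αγ) :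
    Summable (fun k : ℕ =>
      γ (k + 1) * (((k + 1 : ℕ) : ℝ) ^ αd + db) *
        γ (max 1 ((k + 1) - ⌈((k + 1 : ℕ) : ℝ) ^ αd + db⌉₊))) :=
  stmt_7_general γ0 Kγ hKγ αγ hαγ0 αd hαd0 hαd1 hsum db γ hγ
end

section
/- Let (X_k) be a sequence in a compact set X ⊆ ℝⁿ and let F : X → ℝⁿ be continuous and pseudo-monotone plus. Let x* ∈ X be a critical point (⟨F(x*), x − x*⟩ ≥ 0 for all x ∈ X). If liminf_{k→∞} ⟨F(X_k), X_k − x*⟩ = 0, then there exists a subsequence X_{ℓ_m} converging to some X° ∈ X which is itself a critical point of F on X. -/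
/-!
Choose a subsequence along which `⟪F X_k, X_k - x*⟫` tends to its liminf `0`, then refine it by
compactness so that `X_k` converges to some `X° ∈ X`; by continuity `⟪F X°, X° - x*⟫ = 0`.
Since `x*` is critical, `⟪F x*, X° - x*⟫ ≥ 0`, and pseudo-monotonicity plus gives
`F X° = F x*`. Hence `⟪F X°, x - X°⟫ = ⟪F x*, x - x*⟫ - ⟪F X°, X° - x*⟫ ≥ 0`.
-/

open Filter Topology RealInnerProductSpace

theorem mapClusterPt_liminf {ι α : Type*} [ConditionallyCompleteLinearOrder α]
    [TopologicalSpace α] [OrderTopology α] {l : Filter ι} [NeBot l] {u : ι → α}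
    (hle : IsBoundedUnder (· ≤ ·) l u) (hge : IsBoundedUnder (· ≥ ·) l u) :
    MapClusterPt (liminf u l) l u :=
  ClusterPt.limsInf hle.isCoboundedUnder_ge hge

theorem IsCompact.exists_subseq_tendsto_of_mapClusterPt {E β : Type*} [TopologicalSpace E]
    [FirstCountableTopology E] [TopologicalSpace β] [FirstCountableTopology β] [T2Space β]
    {X : Set E} (hX : IsCompact X) {h : E → β} (hh : ContinuousOn h X) {x : ℕ → E}
    (hx : ∀ k, x k ∈ X) {b : β} (hb : MapClusterPt b atTop (h ∘ x)) :
    ∃ a ∈ X, ∃ φ : ℕ → ℕ, StrictMono φ ∧ Tendsto (x ∘ φ) atTop (𝓝 a) ∧ h a = b := by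
  obtain ⟨ψ, hψ, hhψ⟩ := hb.tendsto_subseq
  obtain ⟨a, ha, φ, hφ, hxψφ⟩ := hX.tendsto_subseq fun k => hx (ψ k)
  refine ⟨a, ha, ψ ∘ φ, hψ.comp hφ, hxψφ, tendsto_nhds_unique ?_ (hhψ.comp hφ.tendsto_atTop)⟩
  exact (hh a ha).tendsto.comp
    (tendsto_nhdsWithin_iff.mpr ⟨hxψφ, .of_forall fun k => hx (ψ (φ k))⟩)

section VariationalInequality

variable {E : Type*} [NormedAddCommGroup E] [InnerProductSpace ℝ E]

/-- `x` solves the variational inequality of `F` on `X`; `x` itself need not lie in `X`. -/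
def IsVICriticalPoint (F : E → E) (X : Set E) (x : E) : Prop :=
  ∀ y ∈ X, 0 ≤ ⟪F x, y - x⟫

theorem IsVICriticalPoint.of_map_eq {F : E → E} {X : Set E} {x y : E}
    (hx : IsVICriticalPoint F X x) (hF : F y = F x) (hy : ⟪F y, y - x⟫ = 0) :
    IsVICriticalPoint F X y := fun z hz => by
  have hsplit : ⟪F y, z - y⟫ = ⟪F x, z - x⟫ - ⟪F y, y - x⟫ := by
    rw [hF, ← inner_sub_right, sub_sub_sub_cancel_right]
  rw [hsplit, hy, sub_zero]
  exact hx z hz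

end VariationalInequality

theorem stmt_10_general {n : ℕ} (X : Set (EuclideanSpace ℝ (Fin n)))
    (hX_cpt : IsCompact X)
    (Xs : ℕ → EuclideanSpace ℝ (Fin n)) (hXs : ∀ k, Xs k ∈ X)
    (F : EuclideanSpace ℝ (Fin n) → EuclideanSpace ℝ (Fin n))
    (hF_cont : ContinuousOn F X)
    (hF_plus : ∀ x ∈ X, ∀ y ∈ X, 0 ≤ ⟪F y, x - y⟫ → ⟪F x, x - y⟫ = 0 → F x = F y)
    (xstar : EuclideanSpace ℝ (Fin n)) (hxstar : xstar ∈ X)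
    (hcp : ∀ x ∈ X, 0 ≤ ⟪F xstar, x - xstar⟫)
    (hliminf : liminf (fun k => ⟪F (Xs k), Xs k - xstar⟫) atTop = 0) :
    ∃ X0 ∈ X, ∃ φ : ℕ → ℕ, StrictMono φ ∧
      Tendsto (Xs ∘ φ) atTop (nhds X0) ∧ ∀ x ∈ X, 0 ≤ ⟪F X0, x - X0⟫ := by
  set gap : EuclideanSpace ℝ (Fin n) → ℝ := fun x => ⟪F x, x - xstar⟫
  have hgap : ContinuousOn gap X := hF_cont.inner (continuousOn_id.sub continuousOn_const)
  have hrange : Set.range (gap ∘ Xs) ⊆ gap '' X :=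
    Set.range_subset_iff.mpr fun k => ⟨_, hXs k, rfl⟩
  have hcluster : MapClusterPt 0 atTop (gap ∘ Xs) := hliminf ▸ mapClusterPt_liminf
    ((hX_cpt.bddAbove_image hgap).mono hrange).isBoundedUnder_of_range
    ((hX_cpt.bddBelow_image hgap).mono hrange).isBoundedUnder_of_range
  obtain ⟨X0, hX0, φ, hφ, hlim, hgap0⟩ :=
    hX_cpt.exists_subseq_tendsto_of_mapClusterPt hgap hXs hcluster
  have hFX0 : F X0 = F xstar := hF_plus X0 hX0 xstar hxstar (hcp X0 hX0) hgap0
  exact ⟨X0, hX0, φ, hφ, hlim, IsVICriticalPoint.of_map_eq hcp hFX0 hgap0⟩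

/-- If `(X_k)` lies in a compact set `X`, `F` is continuous and pseudo-monotone plus,
`x*` is a critical point, and `liminf ⟪F X_k, X_k - x*⟫ = 0`, then a subsequence of
`(X_k)` converges to a point `X° ∈ X` which is itself a critical point. -/
theorem stmt_10 {n : ℕ} (X : Set (EuclideanSpace ℝ (Fin n)))
    (hX_cpt : IsCompact X)
    (Xs : ℕ → EuclideanSpace ℝ (Fin n)) (hXs : ∀ k, Xs k ∈ X)
    (F : EuclideanSpace ℝ (Fin n) → EuclideanSpace ℝ (Fin n))
    (hF_cont : ContinuousOn F X)
    (hF_pm : ∀ x ∈ X, ∀ y ∈ X, 0 ≤ ⟪F y, x - y⟫ → 0 ≤ ⟪F x, x - y⟫)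
    (hF_plus : ∀ x ∈ X, ∀ y ∈ X, 0 ≤ ⟪F y, x - y⟫ → ⟪F x, x - y⟫ = 0 → F x = F y)
    (xstar : EuclideanSpace ℝ (Fin n)) (hxstar : xstar ∈ X)
    (hcp : ∀ x ∈ X, 0 ≤ ⟪F xstar, x - xstar⟫)
    (hliminf : liminf (fun k => ⟪F (Xs k), Xs k - xstar⟫) atTop = 0) :
    ∃ X0 ∈ X, ∃ φ : ℕ → ℕ, StrictMono φ ∧
      Tendsto (Xs ∘ φ) atTop (nhds X0) ∧ ∀ x ∈ X, 0 ≤ ⟪F X0, x - X0⟫ :=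
  stmt_10_general X hX_cpt Xs hXs F hF_cont hF_plus xstar hxstar hcp hliminf
end
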